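/- arXiv:1407.0533 — 2 statements merged into one kernel-verified Lean document; each statement's English description precedes it below -/
import Mathlib

section
/- The plasma dispersion function Z(z) = (1/√π) ∫_{−∞}^{∞} e^{−t²}/(t − z) dt, for Im(z) > 0, equals i√π · w(z), where w is the Faddeeva function. -/
open Complex in
noncomputable def faddeeva (z : ℂ) : ℂ :=
  Complex.exp (-z ^ 2) *
    (1 + (2 * I / Real.sqrt Real.pi) * ∫ s in (0 : ℝ)..1, z * Complex.exp ((s * z) ^ 2))

/-!
`F(w) = ∫ e^{-t²} / (t - w) dt` and `iπ · w(w)` solve the same linear equation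
`u' = -2wu - 2√π` off the real axis: for `F` by differentiating under the integral and
integrating by parts, for the Faddeeva function because `w ↦ ∫₀¹ w e^{(sw)²} ds` is a primitive
of `e^{w²}`. Hence `e^{w²} (F - iπ w)` is constant on the upper half-plane, and the constant is
`0` because both `e^{-y²} F(iy)` and `e^{-y²} w(iy) = erfc y` tend to `0` as `y → ∞`.
-/

open Complex MeasureTheory Filter Topology Metric Set
open scoped Real

lemma cexp_neg_sq (t : ℝ) : cexp (-(t : ℂ) ^ 2) = Real.exp (-t ^ 2) := by
  push_cast; rfl

lemma cexp_I_mul_sq (t : ℝ) : cexp ((I * t) ^ 2) = Real.exp (-t ^ 2) := by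
  rw [← cexp_neg_sq, mul_pow, I_sq, neg_one_mul]

noncomputable def cauchyTransform (φ : ℝ → ℂ) (w : ℂ) : ℂ :=
  ∫ t : ℝ, φ t / ((t : ℂ) - w)

lemma abs_im_le_norm_ofReal_sub (t : ℝ) (w : ℂ) : |w.im| ≤ ‖(t : ℂ) - w‖ := by
  simpa using abs_im_le_norm ((t : ℂ) - w)

lemma ofReal_sub_ne_zero {w : ℂ} (hw : w.im ≠ 0) (t : ℝ) : (t : ℂ) - w ≠ 0 :=
  norm_pos_iff.mp ((abs_pos.mpr hw).trans_le (abs_im_le_norm_ofReal_sub t w))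

lemma hasDerivAt_inv_const_sub {a x : ℂ} (h : a - x ≠ 0) :
    HasDerivAt (fun x => (a - x)⁻¹) ((a - x) ^ 2)⁻¹ x :=
  ((hasDerivAt_id x).const_sub a).fun_inv h |>.congr_deriv (by simp [div_eq_mul_inv])

section CauchyTransform

variable {φ φ' : ℝ → ℂ} {w : ℂ}

lemma MeasureTheory.Integrable.mul_inv_ofReal_sub_pow (hφ : Integrable φ) (hw : w.im ≠ 0)
    (n : ℕ) :
    Integrable fun t : ℝ => φ t * (((t : ℂ) - w) ^ n)⁻¹ := by
  refine hφ.mul_bdd (c := (|w.im| ^ n)⁻¹) (by fun_prop) (ae_of_all _ fun t => ?_)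
  rw [norm_inv, norm_pow]
  gcongr
  exact abs_im_le_norm_ofReal_sub t w

lemma MeasureTheory.Integrable.div_ofReal_sub (hφ : Integrable φ) (hw : w.im ≠ 0) :
    Integrable fun t : ℝ => φ t / ((t : ℂ) - w) := by
  simpa [div_eq_mul_inv] using hφ.mul_inv_ofReal_sub_pow hw 1

lemma norm_cauchyTransform_le (hφ : Integrable φ) (hw : w.im ≠ 0) :
    ‖cauchyTransform φ w‖ ≤ (∫ t, ‖φ t‖) / |w.im| := by
  rw [← integral_div]
  refine norm_integral_le_of_norm_le (hφ.norm.div_const _) (ae_of_all _ fun t => ?_)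
  rw [norm_div]
  gcongr
  exact abs_im_le_norm_ofReal_sub t w

lemma hasDerivAt_cauchyTransform (hφ : Integrable φ) (hw : w.im ≠ 0) :
    HasDerivAt (cauchyTransform φ) (∫ t : ℝ, φ t * (((t : ℂ) - w) ^ 2)⁻¹) w := by
  set r := |w.im| / 2 with hr_def
  have hr : 0 < r := by positivity
  have him : ∀ x ∈ ball w r, r ≤ |x.im| := fun x hx => by
    have := (abs_im_le_norm (x - w)).trans_lt (mem_ball_iff_norm.mp hx)
    rw [sub_im] at this
    linarith [abs_sub_abs_le_abs_sub w.im x.im, abs_sub_comm w.im x.im]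
  have hx0 : ∀ x ∈ ball w r, x.im ≠ 0 := fun x hx => abs_pos.mp (hr.trans_le (him x hx))
  refine (hasDerivAt_integral_of_dominated_loc_of_deriv_le (ball_mem_nhds w hr)
    (F' := fun x t => φ t * (((t : ℂ) - x) ^ 2)⁻¹)
    (bound := fun t => ‖φ t‖ * (r ^ 2)⁻¹)
    (eventually_of_mem (ball_mem_nhds w hr) fun x hx =>
      (hφ.div_ofReal_sub (hx0 x hx)).aestronglyMeasurable)
    (hφ.div_ofReal_sub hw)
    (hφ.mul_inv_ofReal_sub_pow hw 2).aestronglyMeasurable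
    (ae_of_all _ fun t x hx => ?_) (hφ.norm.mul_const _)
    (ae_of_all _ fun t x hx => ?_)).2
  · rw [norm_mul, norm_inv, norm_pow]
    gcongr
    exact (him x hx).trans (abs_im_le_norm_ofReal_sub t x)
  · simp_rw [div_eq_mul_inv]
    exact (hasDerivAt_inv_const_sub (ofReal_sub_ne_zero (hx0 x hx) t)).const_mul (φ t)

lemma integral_mul_inv_ofReal_sub_sq (hφ : Integrable φ) (hφ' : Integrable φ')
    (hderiv : ∀ t, HasDerivAt φ (φ' t) t) (hw : w.im ≠ 0) :
    ∫ t : ℝ, φ t * (((t : ℂ) - w) ^ 2)⁻¹ = cauchyTransform φ' w := by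
  have hv : ∀ t : ℝ, HasDerivAt (fun t : ℝ => (w - t)⁻¹) (((t : ℂ) - w) ^ 2)⁻¹ t := by
    intro t
    have h : w - t ≠ 0 := sub_ne_zero.mpr (sub_ne_zero.mp (ofReal_sub_ne_zero hw t)).symm
    exact (hasDerivAt_inv_const_sub h).comp_ofReal.congr_deriv (by ring)
  have hneg : ∀ ψ : ℝ → ℂ,
      (fun t : ℝ => ψ t * (w - t)⁻¹) = fun t => -(ψ t * ((t - w) ^ 1)⁻¹) :=
    fun ψ => funext fun t => by rw [pow_one, ← neg_sub, inv_neg, mul_neg]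
  rw [integral_mul_deriv_eq_deriv_mul_of_integrable (fun t _ => hderiv t) (fun t _ => hv t)
    (hφ.mul_inv_ofReal_sub_pow hw 2)
    (by rw [Pi.mul_def, hneg]; exact (hφ'.mul_inv_ofReal_sub_pow hw 1).neg)
    (by rw [Pi.mul_def, hneg]; exact (hφ.mul_inv_ofReal_sub_pow hw 1).neg),
    hneg, integral_neg, neg_neg]
  simp [cauchyTransform, div_eq_mul_inv]

lemma cauchyTransform_const_mul (c : ℂ) (φ : ℝ → ℂ) (w : ℂ) :
    cauchyTransform (fun t => c * φ t) w = c * cauchyTransform φ w := by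
  simp only [cauchyTransform, mul_div_assoc, integral_const_mul]

lemma cauchyTransform_ofReal_mul (hφ : Integrable φ) (hw : w.im ≠ 0) :
    cauchyTransform (fun t => t * φ t) w = (∫ t, φ t) + w * cauchyTransform φ w := by
  have h : ∀ t : ℝ, (t : ℂ) * φ t / (t - w) = φ t + w * (φ t / (t - w)) := fun t => by
    field_simp [ofReal_sub_ne_zero hw t]
    ring
  simp only [cauchyTransform, h]
  rw [integral_add hφ ((hφ.div_ofReal_sub hw).const_mul w), integral_const_mul]

lemma tendsto_cexp_sq_mul_cauchyTransform_I_mul (hφ : Integrable φ) :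
    Tendsto (fun y : ℝ => cexp ((I * y) ^ 2) * cauchyTransform φ (I * y)) atTop (𝓝 0) := by
  refine squeeze_zero_norm' ?_ ((tendsto_const_nhds (x := ∫ t, ‖φ t‖)).div_atTop tendsto_id)
  filter_upwards [eventually_gt_atTop 0] with y hy
  have hexp : ‖cexp ((I * y) ^ 2)‖ ≤ 1 := by
    rw [cexp_I_mul_sq, norm_real, Real.norm_of_nonneg (Real.exp_pos _).le, Real.exp_le_one_iff]
    exact neg_nonpos.mpr (sq_nonneg y)
  calc ‖cexp ((I * y) ^ 2) * cauchyTransform φ (I * y)‖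
      ≤ 1 * ((∫ t, ‖φ t‖) / |(I * y).im|) := by
        rw [norm_mul]
        gcongr
        exact norm_cauchyTransform_le hφ (by simpa using hy.ne')
    _ = (∫ t, ‖φ t‖) / id y := by simp [abs_of_pos hy]

end CauchyTransform

lemma integrable_cexp_neg_sq : Integrable fun t : ℝ => cexp (-(t : ℂ) ^ 2) := by
  simpa using integrable_cexp_neg_mul_sq (b := 1) (by simp)

lemma integral_cexp_neg_sq : ∫ t : ℝ, cexp (-(t : ℂ) ^ 2) = √π := by
  have h := integral_gaussian 1
  simp only [neg_mul, one_mul, div_one] at h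
  simp_rw [cexp_neg_sq, integral_complex_ofReal, h]

lemma hasDerivAt_cexp_neg_sq (t : ℝ) :
    HasDerivAt (fun t : ℝ => cexp (-(t : ℂ) ^ 2)) (-2 * (t * cexp (-(t : ℂ) ^ 2))) t :=
  ((hasDerivAt_pow 2 (t : ℂ)).fun_neg.cexp.comp_ofReal).congr_deriv (by ring)

lemma hasDerivAt_cauchyTransform_cexp_neg_sq {w : ℂ} (hw : w.im ≠ 0) :
    HasDerivAt (cauchyTransform fun t : ℝ => cexp (-(t : ℂ) ^ 2))
      (-2 * √π - 2 * w * cauchyTransform (fun t : ℝ => cexp (-(t : ℂ) ^ 2)) w) w := by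
  have hφ' : Integrable fun t : ℝ => -2 * (t * cexp (-(t : ℂ) ^ 2)) := by
    simpa using (integrable_mul_cexp_neg_mul_sq (b := 1) (by simp)).const_mul (-2)
  have h := hasDerivAt_cauchyTransform integrable_cexp_neg_sq hw
  rw [integral_mul_inv_ofReal_sub_sq integrable_cexp_neg_sq hφ' hasDerivAt_cexp_neg_sq hw] at h
  convert h using 1
  rw [cauchyTransform_const_mul, cauchyTransform_ofReal_mul integrable_cexp_neg_sq hw,
    integral_cexp_neg_sq]
  ring

lemma integral_mul_comp_ofReal_mul {f g : ℂ → ℂ} (hg : ∀ u, HasDerivAt g (f u) u)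
    (hf : Continuous f) (w : ℂ) :
    ∫ s in (0 : ℝ)..1, w * f (s * w) = g w - g 0 := by
  have hderiv : ∀ s : ℝ, HasDerivAt (fun s : ℝ => g (s * w)) (w * f (s * w)) s := fun s =>
    ((hg _).comp (s : ℂ) (hasDerivAt_mul_const w)).comp_ofReal.congr_deriv
      (mul_comm _ _)
  rw [intervalIntegral.integral_eq_sub_of_hasDerivAt (fun s _ => hderiv s)
    ((by fun_prop : Continuous fun s : ℝ => w * f (s * w)).intervalIntegrable 0 1)]
  simp

lemma hasDerivAt_integral_mul_comp_ofReal_mul {f : ℂ → ℂ} (hf : Differentiable ℂ f)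
    (w : ℂ) :
    HasDerivAt (fun w => ∫ s in (0 : ℝ)..1, w * f (s * w)) (f w) w := by
  obtain ⟨g, hg⟩ := hf.isExactOn_univ
  have hg' : ∀ u, HasDerivAt g (f u) u := fun u => hg u (mem_univ u)
  simp_rw [integral_mul_comp_ofReal_mul hg' hf.continuous]
  exact (hg' w).sub_const _

lemma integral_mul_comp_ofReal_mul_mul_ofReal (f : ℂ → ℂ) (c : ℂ) (y : ℝ) :
    ∫ s in (0 : ℝ)..1, c * y * f (s * (c * y)) = c * ∫ u in (0 : ℝ)..y, f (c * u) := by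
  have h := intervalIntegral.smul_integral_comp_mul_left (a := 0) (b := 1)
    (fun u : ℝ => f (c * u)) y
  simp only [mul_zero, mul_one, real_smul, ofReal_mul] at h
  rw [← h, ← intervalIntegral.integral_const_mul, ← intervalIntegral.integral_const_mul]
  congr 1
  ext s
  ring_nf

lemma hasDerivAt_faddeeva (w : ℂ) :
    HasDerivAt faddeeva (2 * I / √π - 2 * w * faddeeva w) w := by
  have hexp : HasDerivAt (fun w : ℂ => cexp (-w ^ 2)) (-2 * w * cexp (-w ^ 2)) w :=
    (hasDerivAt_pow 2 w).fun_neg.cexp.congr_deriv (by ring)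
  have hH := hasDerivAt_integral_mul_comp_ofReal_mul (f := fun u => cexp (u ^ 2))
    (by fun_prop) w
  refine (hexp.mul ((hH.const_mul (2 * I / √π)).const_add 1)).congr_deriv ?_
  have : cexp (-w ^ 2) * cexp (w ^ 2) = 1 := by rw [← exp_add, neg_add_cancel, exp_zero]
  simp only [faddeeva]
  linear_combination (2 * I / √π) * this

lemma tendsto_integral_exp_neg_sq :
    Tendsto (fun y : ℝ => ∫ u in (0 : ℝ)..y, Real.exp (-u ^ 2)) atTop (𝓝 (√π / 2)) := by
  have h := integral_gaussian_Ioi 1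
  simp only [neg_mul, one_mul, div_one] at h
  rw [← h]
  refine intervalIntegral_tendsto_integral_Ioi 0 ?_ tendsto_id
  simpa using (integrable_exp_neg_mul_sq one_pos).integrableOn

lemma tendsto_cexp_sq_mul_faddeeva_I_mul :
    Tendsto (fun y : ℝ => cexp ((I * y) ^ 2) * faddeeva (I * y)) atTop (𝓝 0) := by
  have h : ∀ y : ℝ, cexp ((I * y) ^ 2) * faddeeva (I * y) =
      1 + 2 * I / √π * (I * ↑(∫ u in (0 : ℝ)..y, Real.exp (-u ^ 2))) := fun y => by
    rw [faddeeva, ← mul_assoc, ← exp_add, add_neg_cancel, exp_zero, one_mul,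
      integral_mul_comp_ofReal_mul_mul_ofReal (fun u => cexp (u ^ 2)),
      ← intervalIntegral.integral_ofReal]
    simp_rw [cexp_I_mul_sq]
  simp_rw [h]
  convert ((continuous_ofReal.tendsto _).comp tendsto_integral_exp_neg_sq).const_mul
    (2 * I / √π * I) |>.const_add 1 using 1
  · ext y; simp [mul_assoc]
  · push_cast
    field_simp
    simp [I_sq]

lemma hasDerivAt_cexp_sq_mul_of_hasDerivAt {D : ℂ → ℂ} {w : ℂ}
    (hD : HasDerivAt D (-2 * w * D w) w) :
    HasDerivAt (fun w => cexp (w ^ 2) * D w) 0 w :=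
  ((hasDerivAt_pow 2 w).cexp.mul hD).congr_deriv (by ring)

lemma eq_of_hasDerivAt_zero_of_tendsto_I_mul {f : ℂ → ℂ} {L : ℂ}
    (hf : ∀ w : ℂ, 0 < w.im → HasDerivAt f 0 w)
    (hlim : Tendsto (fun y : ℝ => f (I * y)) atTop (𝓝 L)) {z : ℂ} (hz : 0 < z.im) :
    f z = L := by
  have hU : IsOpen {w : ℂ | 0 < w.im} := isOpen_lt continuous_const continuous_im
  have hconst : ∀ y : ℝ, 0 < y → f (I * y) = f z := fun y hy =>
    hU.is_const_of_deriv_eq_zero (convex_halfSpace_im_gt 0).isPreconnected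
      (fun w hw => (hf w hw).differentiableAt.differentiableWithinAt)
      (fun w hw => (hf w hw).deriv) (by simpa using hy) hz
  exact tendsto_nhds_unique (tendsto_const_nhds.congr'
    (eventually_gt_atTop 0 |>.mono fun y hy => (hconst y hy).symm)) hlim

open Complex in
theorem plasma_dispersion_eq (z : ℂ) (hz : 0 < z.im) :
    (1 / Real.sqrt Real.pi : ℂ) * ∫ t : ℝ, Complex.exp (-(t : ℂ) ^ 2) / ((t : ℂ) - z) =
      I * Real.sqrt Real.pi * faddeeva z := by
  set F := cauchyTransform fun t : ℝ => cexp (-(t : ℂ) ^ 2)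
  have hsq : (√π : ℂ) ^ 2 = π := by rw [← ofReal_pow, Real.sq_sqrt Real.pi_pos.le]
  have hD : ∀ w : ℂ, 0 < w.im →
      HasDerivAt (fun w => cexp (w ^ 2) * (F w - I * π * faddeeva w)) 0 w := fun w hw =>
    hasDerivAt_cexp_sq_mul_of_hasDerivAt <|
      ((hasDerivAt_cauchyTransform_cexp_neg_sq hw.ne').sub
        ((hasDerivAt_faddeeva w).const_mul (I * π))).congr_deriv (by
          rw [← hsq]
          field_simp
          linear_combination -(√π : ℂ) * I_sq)
  have hlim : Tendsto (fun y : ℝ => cexp ((I * y) ^ 2) * (F (I * y) - I * π * faddeeva (I * y)))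
      atTop (𝓝 0) := by
    simpa [mul_sub, mul_left_comm] using
      (tendsto_cexp_sq_mul_cauchyTransform_I_mul integrable_cexp_neg_sq).sub
        (tendsto_cexp_sq_mul_faddeeva_I_mul.const_mul (I * π))
  have hFz : F z = I * π * faddeeva z := by
    simpa [exp_ne_zero, sub_eq_zero] using eq_of_hasDerivAt_zero_of_tendsto_I_mul hD hlim hz
  change (1 / √π : ℂ) * F z = _
  rw [hFz, ← hsq]
  field_simp
end

section
/- For every real t, the symmetric series ∑_{p=−∞}^{∞} sinc(t + p) converges to π. -/
/-!
Since `sinc x = ∫₀¹ cos (x u) du`, the partial sum is `∫₀¹ cos (t u) D_N(u) du`, where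
`D_N(u) = ∑_{|p| ≤ N} cos (p u) = sin ((N + 1/2) u) / sin (u / 2)` is the Dirichlet kernel.
As `∫₀^π D_N = π`, the partial sum minus `π` is
`∫₀¹ (cos (t u) - 1) / sin (u / 2) · sin ((N + 1/2) u) du`
`  - ∫₁^π sin ((N + 1/2) u) / sin (u / 2) du`.
Both factors multiplying `sin ((N + 1/2) u)` are integrable (the first is bounded near `0`),
so both terms tend to `0` by the Riemann–Lebesgue lemma.
-/

noncomputable def sinc (t : ℝ) : ℝ := if t = 0 then 1 else Real.sin t / t

open Real hiding sinc
open MeasureTheory Filter Topology Set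

open FourierTransform in
theorem integral_mul_sin_eq_neg_im_fourier {f : ℝ → ℝ} (hf : Integrable f) (c : ℝ) :
    ∫ x, f x * sin (c * x) = -(𝓕 (fun x => (f x : ℂ)) (c / (2 * π))).im := by
  rw [fourier_real_eq_integral_exp_smul, ← neg_eq_iff_eq_neg, ← integral_neg,
    eq_comm]
  simp_rw [smul_eq_mul]
  have hF : Integrable fun v : ℝ =>
      Complex.exp (↑(-2 * π * v * (c / (2 * π))) * Complex.I) * (f v : ℂ) :=
    hf.ofReal.bdd_mul (c := 1) (by fun_prop)
      (.of_forall fun _ => by rw [Complex.norm_exp_ofReal_mul_I])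
  refine (Complex.imCLM.integral_comp_comm hF).symm.trans
    (integral_congr_ae (.of_forall fun v => ?_))
  have harg : -2 * π * v * (c / (2 * π)) = -(c * v) := by field_simp
  simp only [Complex.imCLM_apply, harg]
  rw [mul_comm, Complex.im_ofReal_mul, Complex.exp_ofReal_mul_I_im, sin_neg, mul_neg]

theorem tendsto_integral_mul_sin_cocompact {f : ℝ → ℝ} (hf : Integrable f) :
    Tendsto (fun c => ∫ x, f x * sin (c * x)) (cocompact ℝ) (𝓝 0) := by
  simp_rw [integral_mul_sin_eq_neg_im_fourier hf, div_eq_mul_inv]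
  simpa using (((Complex.continuous_im.tendsto 0).comp (Real.zero_at_infty_fourier _)).comp
    (tendsto_cocompact_mul_right₀ (inv_ne_zero two_pi_pos.ne'))).neg

theorem tendsto_intervalIntegral_mul_sin_cocompact {f : ℝ → ℝ} {a b : ℝ}
    (hf : IntervalIntegrable f volume a b) :
    Tendsto (fun c => ∫ x in a..b, f x * sin (c * x)) (cocompact ℝ) (𝓝 0) := by
  simp_rw [intervalIntegral.intervalIntegral_eq_integral_uIoc,
    ← integral_indicator measurableSet_uIoc, indicator_mul_left]
  simpa using (tendsto_integral_mul_sin_cocompact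
    ((integrable_indicator_iff measurableSet_uIoc).2 hf.def')).const_smul
      (if a ≤ b then (1 : ℝ) else -1)

theorem sinc_eq_integral_cos (x : ℝ) : sinc x = ∫ u in (0 : ℝ)..1, cos (x * u) := by
  rcases eq_or_ne x 0 with rfl | hx
  · simp [sinc]
  · rw [sinc, if_neg hx, intervalIntegral.integral_comp_mul_left _ hx]
    simp [integral_cos, div_eq_inv_mul]

theorem sin_half_pos {u : ℝ} (h0 : 0 < u) (h1 : u < 2 * π) : 0 < sin (u / 2) :=
  sin_pos_of_pos_of_lt_pi (by linarith) (by linarith)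

-- Off `2πℤ` this is `∑_{|p| ≤ N} cos (p u)`; on `2πℤ` division by zero makes it `0`.
noncomputable def dirichletKernel (N : ℕ) (u : ℝ) : ℝ := sin ((N + 1 / 2) * u) / sin (u / 2)

theorem cos_mul_two_sin_half (x u : ℝ) :
    cos (x * u) * (2 * sin (u / 2)) = sin ((x + 1 / 2) * u) - sin ((x - 1 / 2) * u) := by
  rw [show (x + 1 / 2) * u = x * u + u / 2 by ring, show (x - 1 / 2) * u = x * u - u / 2 by ring,
    sin_add, sin_sub]
  ring

theorem sum_cos_mul_two_sin_half (t u : ℝ) (N : ℕ) :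
    (∑ p ∈ Finset.Icc (-(N : ℤ)) N, cos ((t + p) * u)) * (2 * sin (u / 2))
      = sin ((t + N + 1 / 2) * u) - sin ((t - N - 1 / 2) * u) := by
  induction N with
  | zero => simp [cos_mul_two_sin_half]
  | succ N ih =>
    have hIcc : Finset.Icc (-((N + 1 : ℕ) : ℤ)) (N + 1 : ℕ)
        = insert (-((N : ℤ) + 1)) (insert ((N : ℤ) + 1) (Finset.Icc (-(N : ℤ)) N)) := by
      ext x; simp only [Finset.mem_Icc, Finset.mem_insert]; omega
    rw [hIcc, Finset.sum_insert (by simp only [Finset.mem_insert, Finset.mem_Icc]; omega),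
      Finset.sum_insert (by simp only [Finset.mem_Icc]; omega), add_mul (cos _),
      add_mul (cos _), ih, cos_mul_two_sin_half, cos_mul_two_sin_half]
    push_cast
    ring_nf

theorem sum_cos_eq_cos_mul_dirichletKernel (t : ℝ) (N : ℕ) {u : ℝ} (hu : sin (u / 2) ≠ 0) :
    ∑ p ∈ Finset.Icc (-(N : ℤ)) N, cos ((t + p) * u) = cos (t * u) * dirichletKernel N u := by
  have h := sum_cos_mul_two_sin_half t u N
  rw [show (t + N + 1 / 2) * u = t * u + (N + 1 / 2) * u by ring,
    show (t - N - 1 / 2) * u = t * u - (N + 1 / 2) * u by ring, sin_add, sin_sub] at h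
  rw [dirichletKernel, mul_div_assoc', eq_div_iff hu]
  linear_combination h / 2

theorem sum_cos_int_mul_eq_dirichletKernel (N : ℕ) {u : ℝ} (hu : sin (u / 2) ≠ 0) :
    ∑ p ∈ Finset.Icc (-(N : ℤ)) N, cos (p * u) = dirichletKernel N u := by
  simpa using sum_cos_eq_cos_mul_dirichletKernel 0 N hu

theorem sin_half_ne_zero_of_mem_Ioo {u : ℝ} (hu : u ∈ Ioo 0 π) : sin (u / 2) ≠ 0 :=
  (sin_half_pos hu.1 (by linarith [hu.2, pi_pos])).ne'

theorem one_mem_uIcc_zero_pi : (1 : ℝ) ∈ uIcc 0 π :=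
  mem_uIcc_of_le zero_le_one (by linarith [pi_gt_three])

theorem intervalIntegrable_dirichletKernel (N : ℕ) :
    IntervalIntegrable (dirichletKernel N) volume 0 π := by
  refine (Continuous.intervalIntegrable (by fun_prop) 0 π).congr_uIoo fun u hu =>
    sum_cos_int_mul_eq_dirichletKernel N (sin_half_ne_zero_of_mem_Ioo ?_)
  rwa [uIoo_of_le pi_pos.le] at hu

theorem integral_dirichletKernel (N : ℕ) : ∫ u in (0 : ℝ)..π, dirichletKernel N u = π := by
  rw [← intervalIntegral.integral_congr_Ioo_of_le pi_pos.le fun u hu =>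
      sum_cos_int_mul_eq_dirichletKernel N (sin_half_ne_zero_of_mem_Ioo hu),
    intervalIntegral.integral_finsetSum fun p _ =>
      (by fun_prop : Continuous _).intervalIntegrable _ _]
  have h (p : ℤ) : ∫ u in (0 : ℝ)..π, cos (p * u) = if p = 0 then π else 0 := by
    split_ifs with hp
    · simp [hp]
    · rw [intervalIntegral.integral_comp_mul_left cos (Int.cast_ne_zero.mpr hp)]
      simp [sin_int_mul_pi]
  simp [h]

theorem sum_sinc_eq_integral_cos_mul_dirichletKernel (t : ℝ) (N : ℕ) :
    ∑ p ∈ Finset.Icc (-(N : ℤ)) N, sinc (t + p)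
      = ∫ u in (0 : ℝ)..1, cos (t * u) * dirichletKernel N u := by
  simp_rw [sinc_eq_integral_cos]
  rw [← intervalIntegral.integral_finsetSum fun p _ =>
    (by fun_prop : Continuous _).intervalIntegrable _ _]
  exact intervalIntegral.integral_congr_Ioo_of_le zero_le_one fun u hu =>
    sum_cos_eq_cos_mul_dirichletKernel t N
      (sin_half_ne_zero_of_mem_Ioo ⟨hu.1, hu.2.trans (by linarith [pi_gt_three])⟩)

theorem integral_cos_mul_dirichletKernel (t : ℝ) (N : ℕ) :
    ∫ u in (0 : ℝ)..1, cos (t * u) * dirichletKernel N u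
      = (∫ u in (0 : ℝ)..1, (cos (t * u) - 1) / sin (u / 2) * sin ((N + 1 / 2) * u))
        - (∫ u in (1 : ℝ)..π, (sin (u / 2))⁻¹ * sin ((N + 1 / 2) * u)) + π := by
  have hD := intervalIntegrable_dirichletKernel N
  have hD₁ : IntervalIntegrable (dirichletKernel N) volume 0 1 :=
    hD.mono_set (uIcc_subset_uIcc_left one_mem_uIcc_zero_pi)
  calc ∫ u in (0 : ℝ)..1, cos (t * u) * dirichletKernel N u
      = (∫ u in (0 : ℝ)..1, (cos (t * u) - 1) * dirichletKernel N u)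
          + ∫ u in (0 : ℝ)..1, dirichletKernel N u := by
        rw [← intervalIntegral.integral_add (hD₁.continuousOn_mul (by fun_prop)) hD₁]
        simp only [sub_one_mul, sub_add_cancel]
    _ = (∫ u in (0 : ℝ)..1, (cos (t * u) - 1) * dirichletKernel N u)
          + (π - ∫ u in (1 : ℝ)..π, dirichletKernel N u) := by
        rw [← intervalIntegral.integral_interval_sub_left hD hD₁, integral_dirichletKernel,
          sub_sub_cancel]
    _ = _ := by
        have hA (u : ℝ) : (cos (t * u) - 1) * dirichletKernel N u
            = (cos (t * u) - 1) / sin (u / 2) * sin ((N + 1 / 2) * u) := by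
          rw [dirichletKernel]; ring
        have hB (u : ℝ) : dirichletKernel N u = (sin (u / 2))⁻¹ * sin ((N + 1 / 2) * u) := by
          rw [dirichletKernel]; ring
        simp_rw [hA, hB]
        ring

theorem intervalIntegrable_cos_sub_one_div_sin_half (t : ℝ) :
    IntervalIntegrable (fun u => (cos (t * u) - 1) / sin (u / 2)) volume 0 π := by
  refine (intervalIntegrable_iff_integrableOn_Ioc_of_le pi_pos.le).2
    (Measure.integrableOn_of_bounded (M := π * |t|) measure_Ioc_lt_top.ne
      (by fun_prop : Measurable _).aestronglyMeasurable ?_)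
  filter_upwards [ae_restrict_mem measurableSet_Ioc] with u ⟨hu₀, huπ⟩
  have hsin : u / π ≤ sin (u / 2) := by
    have := mul_le_sin (x := u / 2) (by linarith) (by linarith)
    rwa [show 2 / π * (u / 2) = u / π by ring] at this
  have hcos : |cos (t * u) - 1| ≤ |t| * u := by
    simpa [abs_mul, abs_of_pos hu₀] using abs_cos_sub_cos_le (t * u) 0
  have hu : 0 < u / π := by positivity
  rw [norm_div, Real.norm_eq_abs, Real.norm_eq_abs, abs_of_pos (hu.trans_le hsin)]
  calc |cos (t * u) - 1| / sin (u / 2) ≤ |t| * u / (u / π) :=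
        div_le_div₀ (by positivity) hcos hu hsin
    _ = π * |t| := by field_simp

theorem intervalIntegrable_inv_sin_half {a : ℝ} (ha : 0 < a) (haπ : a ≤ π) :
    IntervalIntegrable (fun u => (sin (u / 2))⁻¹) volume a π := by
  refine ContinuousOn.intervalIntegrable ((by fun_prop : Continuous _).continuousOn.inv₀ ?_)
  rw [uIcc_of_le haπ]
  exact fun u hu => (sin_half_pos (ha.trans_le hu.1) (by linarith [hu.2, pi_pos])).ne'

theorem sinc_periodization_one (t : ℝ) :
    Filter.Tendsto (fun N : ℕ => ∑ p ∈ Finset.Icc (-(N : ℤ)) (N : ℤ), sinc (t + p))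
      Filter.atTop (nhds Real.pi) := by
  have hN : Tendsto (fun N : ℕ => (N : ℝ) + 1 / 2) atTop (cocompact ℝ) :=
    (tendsto_atTop_add_const_right _ _ tendsto_natCast_atTop_atTop).mono_right atTop_le_cocompact
  have h₀ := (tendsto_intervalIntegral_mul_sin_cocompact
    ((intervalIntegrable_cos_sub_one_div_sin_half t).mono_set
      (uIcc_subset_uIcc_left one_mem_uIcc_zero_pi))).comp hN
  have h₁ := (tendsto_intervalIntegral_mul_sin_cocompact
    (intervalIntegrable_inv_sin_half one_pos (by linarith [pi_gt_three]))).comp hN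
  simpa [sum_sinc_eq_integral_cos_mul_dirichletKernel, integral_cos_mul_dirichletKernel]
    using (h₀.sub h₁).add_const π
end
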